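/- For all integers n and s with n ≥ s ≥ 4, every K_s-saturated graph G on n vertices satisfies N(M_2, G) ≥ N(M_2, S_{n,s−2}), with equality if and only if G is isomorphic to S_{n,s−2}. -/

import Mathlib

/-- `sGraph n k` is the join `S_{n,k}` of the complete graph `K_k` with the empty graph on
`n - k` vertices: the first `k` vertices of `Fin n` form a clique joined to the rest. -/
def sGraph (n k : ℕ) : SimpleGraph (Fin n) where
  Adj i j := i ≠ j ∧ ((i : ℕ) < k ∨ (j : ℕ) < k)
  symm := ⟨fun i j h => ⟨h.1.symm, h.2.symm⟩⟩
  loopless := ⟨fun i h => h.1 rfl⟩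

/-- `G` is `K_s`-saturated: `G` has no `K_s` subgraph, but adding any edge between two
distinct nonadjacent vertices creates one. -/
def IsKSat {V : Type*} (G : SimpleGraph V) (s : ℕ) : Prop :=
  G.CliqueFree s ∧
    ∀ u v : V, u ≠ v → ¬ G.Adj u v →
      ¬ (G ⊔ SimpleGraph.fromEdgeSet {s(u, v)}).CliqueFree s

/-- `numMatchings G k` is the number of copies of `M_k` in `G`, i.e. the number of
`k`-element sets of pairwise disjoint edges of `G`. -/
noncomputable def numMatchings {V : Type*} (G : SimpleGraph V) (k : ℕ) : ℕ :=
  Set.ncard {M : Finset (Sym2 V) | M.card = k ∧ (∀ e ∈ M, e ∈ G.edgeSet) ∧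
    ∀ e ∈ M, ∀ f ∈ M, e ≠ f → ∀ v, v ∈ e → v ∉ f}

/-- `satM n k s` is the minimum number of copies of `M_k` over all `K_s`-saturated graphs
on `n` vertices. -/
noncomputable def satM (n k s : ℕ) : ℕ :=
  sInf {m | ∃ G : SimpleGraph (Fin n), IsKSat G s ∧ numMatchings G k = m}

/-- `numIndepSets G ℓ` is the number of independent sets of size `ℓ` in `G`. -/
noncomputable def numIndepSets {V : Type*} (G : SimpleGraph V) (ℓ : ℕ) : ℕ :=
  Set.ncard {t : Finset V | t.card = ℓ ∧ ∀ v ∈ t, ∀ w ∈ t, ¬ G.Adj v w}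

/-- `numCliques G r` is the number of copies of `K_r` in `G`, i.e. the number of
`r`-element vertex subsets inducing a complete graph. -/
noncomputable def numCliques {V : Type*} (G : SimpleGraph V) (r : ℕ) : ℕ :=
  Set.ncard {t : Finset V | t.card = r ∧ G.IsClique (t : Set V)}

/-!
Write `k = s - 2`, `m` for the number of edges and `d v` for the degrees. Since
`N(M₂, G) = C(m, 2) - ∑ C(d v, 2)` and `k ≤ d v ≤ n - 1` in a `K_{k+2}`-saturated graph, bounding
each `C(d v, 2)` by its chord between `k` and `n - 1` shows that `2 N(M₂, G)` exceeds a function of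
`m` alone, increasing for `m ≥ |E(S_{n,k})|`, by the defect `∑ (d v - k) (n - 1 - d v) ≥ 0`.

So the heart of the matter is the edge bound `m ≥ |E(S_{n,k})|` of Erdős, Hajnal and Moon, proved
here by Kalai's argument in the rigidity matroid of vertices placed on the moment curve. If `uv` is
not an edge, `G + uv` contains a `K_{k+2}`, whose `k + 2` points carry an affine dependence that is
nonzero at every point; it induces a self-stress of that clique, which puts the rigidity row of
`uv` in the span of the rows of `G`. On the other hand the rows of any graph covered by `k`
vertices, such as `S_{n,k}`, are independent. Equality forces `m = |E(S_{n,k})|` and all degrees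
in `{k, n - 1}`, hence `G ≅ S_{n,k}`.
-/

open Finset SimpleGraph

section MomentCurve

variable {K : Type*} [Field K] {k : ℕ}

def momentVec (k : ℕ) (a : K) : Fin (k + 1) → K := fun j => a ^ (j : ℕ)

theorem linearIndepOn_momentVec {s : Finset K} (hs : #s ≤ k + 1) :
    LinearIndepOn K (momentVec k) (s : Set K) := by
  rw [linearIndepOn_iff']
  intro t g hts hsum
  have ht : #t ≤ k + 1 := (card_le_card (by exact_mod_cast hts)).trans hs
  set f : Fin #t → K := fun i => t.equivFin.symm i
  have hf : Function.Injective f := Subtype.val_injective.comp t.equivFin.symm.injective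
  have hg : (fun i => g (f i)) = 0 := by
    refine Matrix.eq_zero_of_forall_pow_sum_mul_pow_eq_zero hf fun i => ?_
    have hi := congrFun hsum ⟨i, by omega⟩
    simp only [Finset.sum_apply, Pi.smul_apply, momentVec, smul_eq_mul, Pi.zero_apply] at hi
    rw [← hi, ← t.sum_coe_sort, ← t.equivFin.symm.sum_comp]
  intro a ha
  simpa [f] using congrFun hg (t.equivFin ⟨a, ha⟩)

variable {V : Type*} {x : V → K}

theorem linearIndepOn_momentVec_comp (hx : Function.Injective x) {s : Finset V}
    (hs : #s ≤ k + 1) : LinearIndepOn K (momentVec k ∘ x) (s : Set V) := by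
  classical
  refine LinearIndepOn.comp_of_image ?_ hx.injOn
  rw [← coe_image]
  exact linearIndepOn_momentVec (card_image_le.trans hs)

variable [DecidableEq V]

theorem linearIndepOn_momentVec_sub (hx : Function.Injective x) {w : V} {D : Finset V}
    (hw : w ∉ D) (hD : #D ≤ k) :
    LinearIndepOn K (fun u => momentVec k (x w) - momentVec k (x u)) (D : Set V) := by
  rw [linearIndepOn_iff']
  intro t g htD hsum
  have hwt : w ∉ t := fun h => hw (htD h)
  set c : V → K := fun i => if i = w then ∑ u ∈ t, g u else -g i
  have hc : ∑ i ∈ insert w t, c i • momentVec k (x i) = 0 := by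
    have hct : ∀ i ∈ t, c i = -g i := fun i hi => if_neg (ne_of_mem_of_not_mem hi hwt)
    rw [sum_insert hwt, show c w = ∑ u ∈ t, g u from if_pos rfl,
      sum_congr rfl (g := fun i => -g i • momentVec k (x i)) fun i hi => by rw [hct i hi]]
    simpa only [sum_smul, neg_smul, sum_neg_distrib, ← sub_eq_add_neg, ← sum_sub_distrib,
      ← smul_sub] using hsum
  have hind := linearIndepOn_iff'.mp (linearIndepOn_momentVec_comp (k := k) hx
    ((card_insert_le w t).trans (by have := card_le_card (s := t) (by exact_mod_cast htD); omega)))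
  intro u hu
  simpa [c, ne_of_mem_of_not_mem hu hwt] using
    hind _ c subset_rfl hc u (mem_insert_of_mem hu)

theorem exists_momentVec_relation (hx : Function.Injective x) {t : Finset V} (ht : #t = k + 2) :
    ∃ c : V → K, ∑ i ∈ t, c i = 0 ∧ ∑ i ∈ t, c i • momentVec k (x i) = 0 ∧
      ∀ i ∈ t, c i ≠ 0 := by
  have hdep : ¬ LinearIndepOn K (momentVec k ∘ x) (t : Set V) := fun h => by
    have := LinearIndependent.fintype_card_le_finrank h
    simp [ht] at this
  rw [linearIndepOn_iff''] at hdep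
  push Not at hdep
  obtain ⟨s, c, hst, hc0, hcs, j, hjs, hcj⟩ := hdep
  have hct : ∑ i ∈ t, c i • momentVec k (x i) = 0 := by
    rw [← sum_subset (by exact_mod_cast hst) fun i _ hi => by simp [hc0 i hi]]
    exact hcs
  refine ⟨c, ?_, hct, fun i hi hci => ?_⟩
  · -- coordinate `0` of the moment curve is constantly `1`
    simpa [momentVec] using congrFun hct 0
  · have hrest : ∑ l ∈ t.erase i, c l • momentVec k (x l) = 0 := by
      rw [← add_sum_erase t _ hi, hci, zero_smul, zero_add] at hct
      exact hct
    refine hcj (linearIndepOn_iff'.mp (linearIndepOn_momentVec_comp hx (by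
      rw [card_erase_of_mem hi, ht]; omega)) _ c subset_rfl hrest j ?_)
    exact mem_erase.mpr ⟨fun h => hcj (h ▸ hci), by exact_mod_cast hst hjs⟩

end MomentCurve

section Saturation

variable {V : Type*} {G : SimpleGraph V} {s : ℕ}

theorem IsKSat.exists_clique_of_not_adj [DecidableEq V] (hG : IsKSat G s) {u v : V} (huv : u ≠ v)
    (hnadj : ¬ G.Adj u v) :
    ∃ t : Finset V, #t = s ∧ u ∈ t ∧ v ∈ t ∧
      ∀ a ∈ t, ∀ b ∈ t, a ≠ b → s(a, b) ≠ s(u, v) → G.Adj a b := by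
  have hfree : ¬ (G ⊔ edge u v).CliqueFree s := hG.2 u v huv hnadj
  obtain ⟨t, ht⟩ := not_forall_not.mp hfree
  refine ⟨t, ht.2, hG.1.mem_of_sup_edge_isNClique ht,
    hG.1.mem_of_sup_edge_isNClique (edge_comm u v ▸ ht), fun a ha b hb hab hne => ?_⟩
  have hadj := ht.1 ha hb hab
  rw [sup_adj, edge_adj] at hadj
  refine hadj.resolve_right fun h => hne ?_
  rcases h.1 with ⟨rfl, rfl⟩ | ⟨rfl, rfl⟩
  · rfl
  · exact Sym2.eq_swap

theorem IsKSat.le_degree [Fintype V] [DecidableRel G.Adj] (hG : IsKSat G s)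
    (hs : s ≤ Fintype.card V + 1) (v : V) : s - 2 ≤ G.degree v := by
  classical
  by_cases hv : G.IsUniversal v
  · rw [(G.degree_eq_card_sub_one v).mpr hv]
    omega
  · obtain ⟨u, hvu, hnadj⟩ : ∃ u, v ≠ u ∧ ¬ G.Adj v u := by simpa [IsUniversal] using hv
    obtain ⟨t, rfl, hut, hvt, hadj⟩ := hG.exists_clique_of_not_adj hvu.symm (fun h => hnadj h.symm)
    have : (t.erase u).erase v ⊆ G.neighborFinset v := fun a ha => by
      obtain ⟨hav, hau, hat⟩ : a ≠ v ∧ a ≠ u ∧ a ∈ t := by simpa using ha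
      refine (mem_neighborFinset _ _ _).mpr (hadj v hvt a hat hav.symm ?_)
      rw [Ne, Sym2.eq_iff]; tauto
    have := card_le_card this
    rw [card_erase_of_mem (mem_erase.mpr ⟨hvu, hvt⟩), card_erase_of_mem hut,
      card_neighborFinset_eq_degree] at this
    omega

end Saturation

section Rigidity

variable {K : Type*} [Field K] {E : Type*} [AddCommGroup E] [Module K E]
  {V : Type*} [DecidableEq V] (p : V → E)

def rigidityRow (u v : V) : V → E := Pi.single u (p u - p v) + Pi.single v (p v - p u)

theorem rigidityRow_comm (u v : V) : rigidityRow p u v = rigidityRow p v u := by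
  unfold rigidityRow; abel

theorem rigidityRow_self (u : V) : rigidityRow p u u = 0 := by
  simp [rigidityRow]

theorem rigidityRow_apply (u v w : V) :
    rigidityRow p u v w = (if w = u then p u - p v else 0) + (if w = v then p v - p u else 0) := by
  simp [rigidityRow, Pi.single_apply]

def edgeRigidityRow : Sym2 V → V → E := Sym2.lift ⟨rigidityRow p, rigidityRow_comm p⟩

@[simp]
theorem edgeRigidityRow_mk (u v : V) : edgeRigidityRow p s(u, v) = rigidityRow p u v := rfl

/-- An affine dependence `c` of the points `p i`, `i ∈ t`, yields the self-stress `c a * c b` of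
the complete graph on `t`. -/
theorem sum_sum_smul_rigidityRow_eq_zero {t : Finset V} {c : V → K} (hc : ∑ i ∈ t, c i = 0)
    (hcp : ∑ i ∈ t, c i • p i = 0) :
    ∑ a ∈ t, ∑ b ∈ t, (c a * c b) • rigidityRow p a b = 0 := by
  have hbal : ∀ z, ∑ b ∈ t, c b • (p z - p b) = 0 := fun z => by
    simp [smul_sub, sum_sub_distrib, ← sum_smul, hc, hcp]
  funext w
  simp only [Finset.sum_apply, Pi.smul_apply, rigidityRow_apply, smul_add, smul_ite, smul_zero,
    sum_add_distrib, Pi.zero_apply]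
  rw [sum_comm (s := t) (t := t), sum_congr rfl fun b _ => sum_ite_eq t w _,
    sum_congr rfl fun a _ => sum_ite_eq t w _]
  split_ifs with hw
  · simp only [mul_comm (c _) (c w), mul_smul, ← smul_sum, hbal, smul_zero, add_zero]
  · simp

theorem sum_smul_edgeRigidityRow_apply [Fintype V] (H : SimpleGraph V) [DecidableRel H.Adj]
    (g : Sym2 V → K) (w : V) :
    (∑ e ∈ H.edgeFinset, g e • edgeRigidityRow p e) w =
      ∑ u ∈ H.neighborFinset w, g s(w, u) • (p w - p u) := by
  have himage : (H.neighborFinset w).image (fun u => s(w, u)) = H.incidenceFinset w := by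
    ext e
    induction e using Sym2.ind with
    | _ a b =>
      simp only [mem_image, mem_neighborFinset, mem_incidenceFinset, mk'_mem_incidenceSet_iff,
        Sym2.eq_iff]
      constructor
      · rintro ⟨u, hwu, ⟨rfl, rfl⟩ | ⟨rfl, rfl⟩⟩
        exacts [⟨hwu, Or.inl rfl⟩, ⟨hwu.symm, Or.inr rfl⟩]
      · rintro ⟨hab, rfl | rfl⟩
        exacts [⟨b, hab, Or.inl ⟨rfl, rfl⟩⟩, ⟨a, hab.symm, Or.inr ⟨rfl, rfl⟩⟩]
  rw [Finset.sum_apply]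
  calc ∑ e ∈ H.edgeFinset, (g e • edgeRigidityRow p e) w
      = ∑ e ∈ H.incidenceFinset w, g e • edgeRigidityRow p e w := by
        refine (sum_subset (incidenceFinset_subset H w) fun e he hew => ?_).symm
        induction e using Sym2.ind with
        | _ a b =>
          have hab : H.Adj a b := mem_edgeFinset.mp he
          have : w ≠ a ∧ w ≠ b := by simpa [mk'_mem_incidenceSet_iff, hab] using hew
          simp [rigidityRow_apply, this.1, this.2]
    _ = ∑ u ∈ H.neighborFinset w, g s(w, u) • (p w - p u) := by
        rw [← himage, sum_image fun _ _ _ _ h => (Sym2.congr_right.mp h)]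
        refine sum_congr rfl fun u hu => ?_
        have hwu : w ≠ u := (H.ne_of_adj ((mem_neighborFinset _ _ _).mp hu))
        simp [rigidityRow_apply, hwu]

variable {p} {k : ℕ}

theorem linearIndepOn_edgeRigidityRow_of_cover [Fintype V]
    (hp : ∀ w (D : Finset V), w ∉ D → #D ≤ k → LinearIndepOn K (fun u => p w - p u) (D : Set V))
    {H : SimpleGraph V} {C : Finset V} (hC : #C ≤ k) (hH : H.IsVertexCover C) :
    LinearIndepOn K (edgeRigidityRow p) H.edgeSet := by
  classical
  rw [linearIndepOn_iff'']
  intro t g htH hg0 hsum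
  have hgH : ∀ u v, ¬ H.Adj u v → g s(u, v) = 0 := fun u v huv =>
    hg0 _ fun hmem => huv (htH hmem)
  have hstress : ∑ e ∈ H.edgeFinset, g e • edgeRigidityRow p e = 0 := by
    rw [← sum_subset (fun e he => mem_edgeFinset.mpr (htH he)) fun e _ he => by simp [hg0 e he]]
    exact hsum
  -- At `w` the dependence is a relation among the `p w - p u`, `u` a neighbour of `w`; once the
  -- coefficients of the edges leaving `C` vanish, at most `#C ≤ k` of them are left.
  have hvertex : ∀ w, (∀ u ∉ C, g s(w, u) = 0) → ∀ u, g s(w, u) = 0 := by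
    intro w hout u
    set D := (H.neighborFinset w).filter (· ∈ C)
    have hwD : w ∉ D := fun h => H.irrefl ((mem_neighborFinset _ _ _).mp (mem_filter.mp h).1)
    have hD : ∑ u ∈ D, g s(w, u) • (p w - p u) = 0 := by
      calc ∑ u ∈ D, g s(w, u) • (p w - p u)
          = ∑ u ∈ H.neighborFinset w, g s(w, u) • (p w - p u) :=
            sum_subset (filter_subset _ _) fun u hu huD => by
              rw [hout u fun huC => huD (mem_filter.mpr ⟨hu, huC⟩), zero_smul]
        _ = 0 := by rw [← sum_smul_edgeRigidityRow_apply, hstress, Pi.zero_apply]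
    by_cases huD : u ∈ D
    · have hDC : #D ≤ k := (card_le_card fun u hu => (mem_filter.mp hu).2).trans hC
      exact linearIndepOn_iff'.mp (hp w D hwD hDC) D _ subset_rfl hD u huD
    · by_cases huC : u ∈ C
      · exact hgH w u fun hwu => huD (mem_filter.mpr ⟨(mem_neighborFinset _ _ _).mpr hwu, huC⟩)
      · exact hout u huC
  have houter : ∀ w ∉ C, ∀ u, g s(w, u) = 0 := fun w hw => hvertex w fun u hu =>
    hgH w u fun hwu => (hH hwu).elim hw hu
  intro e _
  induction e using Sym2.ind with
  | _ u v => exact hvertex u (fun w hw => by rw [Sym2.eq_swap]; exact houter w hw u) v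

theorem rigidityRow_mem_span_of_isKSat [NeZero (2 : K)]
    (hp : ∀ t : Finset V, #t = k + 2 → ∃ c : V → K,
      ∑ i ∈ t, c i = 0 ∧ ∑ i ∈ t, c i • p i = 0 ∧ ∀ i ∈ t, c i ≠ 0)
    {G : SimpleGraph V} (hG : IsKSat G (k + 2)) (u v : V) :
    rigidityRow p u v ∈ Submodule.span K (edgeRigidityRow p '' G.edgeSet) := by
  set T := Submodule.span K (edgeRigidityRow p '' G.edgeSet)
  by_cases huv : u = v
  · rw [huv, rigidityRow_self]
    exact T.zero_mem
  by_cases hadj : G.Adj u v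
  · exact Submodule.subset_span ⟨s(u, v), hadj, rfl⟩
  obtain ⟨t, ht, hut, hvt, htG⟩ := hG.exists_clique_of_not_adj huv hadj
  obtain ⟨c, hc, hcp, hc0⟩ := hp t ht
  have hstress := sum_sum_smul_rigidityRow_eq_zero p hc hcp
  rw [← sum_product' (f := fun a b => (c a * c b) • rigidityRow p a b)] at hstress
  -- The stress has coefficient `2 * (c u * c v) ≠ 0` on `uv`; every other pair of `t` is an edge.
  set P : Finset (V × V) := {(u, v), (v, u)}
  have hP : P ⊆ t ×ˢ t := by simp [P, insert_subset_iff, hut, hvt]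
  have hrest : ∑ q ∈ t ×ˢ t \ P, (c q.1 * c q.2) • rigidityRow p q.1 q.2 ∈ T := by
    refine Submodule.sum_mem T fun ⟨a, b⟩ hq => ?_
    obtain ⟨⟨hat, hbt⟩, hqP⟩ : (a ∈ t ∧ b ∈ t) ∧ (a, b) ∉ P := by simpa using hq
    by_cases hab : a = b
    · rw [hab, rigidityRow_self, smul_zero]
      exact T.zero_mem
    have hne : s(a, b) ≠ s(u, v) := fun h => hqP (by
      rcases Sym2.eq_iff.mp h with ⟨rfl, rfl⟩ | ⟨rfl, rfl⟩ <;> simp [P])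
    exact T.smul_mem _ (Submodule.subset_span ⟨s(a, b), htG a hat b hbt hab hne, rfl⟩)
  have hpair : ∑ q ∈ P, (c q.1 * c q.2) • rigidityRow p q.1 q.2 =
      (2 * (c u * c v)) • rigidityRow p u v := by
    rw [sum_pair (by simp [huv]), rigidityRow_comm p v u, mul_comm (c v), two_mul, add_smul]
  have hsplit := sum_sdiff hP (f := fun q => (c q.1 * c q.2) • rigidityRow p q.1 q.2)
  rw [hpair, hstress] at hsplit
  have hcuv : 2 * (c u * c v) ≠ 0 := by simp [hc0 u hut, hc0 v hvt, NeZero.ne]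
  rw [← inv_smul_smul₀ hcuv (rigidityRow p u v), eq_neg_of_add_eq_zero_right hsplit]
  exact T.smul_mem _ (T.neg_mem hrest)

end Rigidity

theorem IsKSat.card_edgeFinset_le_of_isVertexCover {V : Type*} [Fintype V] [DecidableEq V]
    {G H : SimpleGraph V} [DecidableRel G.Adj] [DecidableRel H.Adj] {k : ℕ}
    (hG : IsKSat G (k + 2)) {C : Finset V} (hC : #C ≤ k) (hH : H.IsVertexCover C) :
    #H.edgeFinset ≤ #G.edgeFinset := by
  set x : V → ℚ := fun v => (Fintype.equivFin V v : ℕ)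
  have hx : Function.Injective x := fun a b h =>
    (Fintype.equivFin V).injective (Fin.ext (Nat.cast_injective h))
  set p : V → Fin (k + 1) → ℚ := fun v => momentVec k (x v)
  set T := Submodule.span ℚ (edgeRigidityRow p '' G.edgeSet)
  have hind : LinearIndepOn ℚ (edgeRigidityRow p) H.edgeSet :=
    linearIndepOn_edgeRigidityRow_of_cover (fun _ _ hw hD => linearIndepOn_momentVec_sub hx hw hD)
      hC hH
  have hmem : ∀ e, edgeRigidityRow p e ∈ T := fun e => by
    induction e using Sym2.ind with
    | _ u v =>
      exact rigidityRow_mem_span_of_isKSat (fun _ ht => exists_momentVec_relation hx ht) hG u v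
  have hrank : Fintype.card H.edgeSet ≤ Module.finrank ℚ T :=
    (LinearIndependent.of_comp T.subtype
      (v := fun e : H.edgeSet => (⟨edgeRigidityRow p e, hmem e⟩ : T)) hind).fintype_card_le_finrank
  have hspan : Module.finrank ℚ T ≤ #(G.edgeFinset.image (edgeRigidityRow p)) := by
    have := finrank_span_finset_le_card (R := ℚ) (G.edgeFinset.image (edgeRigidityRow p))
    rwa [coe_image, coe_edgeFinset] at this
  rw [edgeFinset_card]
  exact hrank.trans (hspan.trans card_image_le)

section Matchings

variable {V : Type*}

theorem numMatchings_le_of_embedding {W : Type*} [Finite W] {G : SimpleGraph V}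
    {H : SimpleGraph W} (f : G ↪g H) (k : ℕ) : numMatchings G k ≤ numMatchings H k := by
  let F : Sym2 V ↪ Sym2 W := ⟨Sym2.map f, Sym2.map.injective f.injective⟩
  refine Set.ncard_le_ncard_of_injOn (fun M => M.map F) ?_ (Finset.map_injective F).injOn
  rintro M ⟨hcard, hedge, hdisj⟩
  refine ⟨by simp [hcard], ?_, ?_⟩
  · simp only [mem_map]
    rintro _ ⟨e, he, rfl⟩
    induction e using Sym2.ind with
    | _ a b => exact f.map_adj_iff.mpr (hedge _ he)
  · simp only [mem_map]
    rintro _ ⟨e, he, rfl⟩ _ ⟨e', he', rfl⟩ hne w hw hw'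
    obtain ⟨a, ha, rfl⟩ := Sym2.mem_map.mp hw
    obtain ⟨b, hb, hab⟩ := Sym2.mem_map.mp hw'
    rw [f.injective hab] at hb
    exact hdisj e he e' he' (fun h => hne (h ▸ rfl)) a ha hb

theorem numMatchings_congr {W : Type*} [Finite V] [Finite W] {G : SimpleGraph V}
    {H : SimpleGraph W} (f : G ≃g H) (k : ℕ) : numMatchings G k = numMatchings H k :=
  (numMatchings_le_of_embedding f.toEmbedding k).antisymm
    (numMatchings_le_of_embedding f.symm.toEmbedding k)

def PairwiseVertexDisjoint (M : Finset (Sym2 V)) : Prop :=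
  ∀ e ∈ M, ∀ f ∈ M, e ≠ f → ∀ v, v ∈ e → v ∉ f

noncomputable instance : DecidablePred (PairwiseVertexDisjoint (V := V)) :=
  Classical.decPred _

theorem pairwiseVertexDisjoint_pair_iff [DecidableEq V] {e f : Sym2 V} (hef : e ≠ f) :
    PairwiseVertexDisjoint {e, f} ↔ ∀ v, v ∈ e → v ∉ f := by
  simp only [PairwiseVertexDisjoint, mem_insert, mem_singleton]
  constructor
  · exact fun h => h e (Or.inl rfl) f (Or.inr rfl) hef
  · rintro h _ (rfl | rfl) _ (rfl | rfl) hne v hv hv'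
    exacts [hne rfl, h v hv hv', h v hv' hv, hne rfl]

variable [Fintype V] (G : SimpleGraph V) [DecidableRel G.Adj]

theorem numMatchings_two_eq_card_filter :
    numMatchings G 2 = #((G.edgeFinset.powersetCard 2).filter PairwiseVertexDisjoint) := by
  rw [numMatchings, ← Set.ncard_coe_finset]
  congr 1
  ext M
  simp [PairwiseVertexDisjoint, subset_iff, and_comm, and_assoc]

variable [DecidableEq V]

theorem filter_not_pairwiseVertexDisjoint_eq_biUnion :
    (G.edgeFinset.powersetCard 2).filter (¬ PairwiseVertexDisjoint ·) =
      univ.biUnion fun v => (G.incidenceFinset v).powersetCard 2 := by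
  ext M
  simp only [mem_filter, mem_powersetCard, mem_biUnion, mem_univ, true_and]
  refine ⟨fun ⟨⟨hME, hM2⟩, hM⟩ => ?_, fun ⟨v, hMv, hM2⟩ => ?_⟩ <;>
    obtain ⟨e, f, hef, rfl⟩ := card_eq_two.mp hM2
  · rw [pairwiseVertexDisjoint_pair_iff hef] at hM
    push Not at hM
    obtain ⟨v, hve, hvf⟩ := hM
    rw [insert_subset_iff, singleton_subset_iff, mem_edgeFinset, mem_edgeFinset] at hME
    refine ⟨v, ?_, hM2⟩
    rw [insert_subset_iff, singleton_subset_iff, mem_incidenceFinset, mem_incidenceFinset]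
    exact ⟨⟨hME.1, hve⟩, ⟨hME.2, hvf⟩⟩
  · rw [insert_subset_iff, singleton_subset_iff, mem_incidenceFinset, mem_incidenceFinset] at hMv
    refine ⟨⟨?_, hM2⟩, fun h => (pairwiseVertexDisjoint_pair_iff hef).mp h v hMv.1.2 hMv.2.2⟩
    rw [insert_subset_iff, singleton_subset_iff, mem_edgeFinset, mem_edgeFinset]
    exact ⟨hMv.1.1, hMv.2.1⟩

theorem pairwiseDisjoint_powersetCard_two_incidenceFinset :
    ((univ : Finset V) : Set V).PairwiseDisjoint fun v => (G.incidenceFinset v).powersetCard 2 := by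
  intro v _ w _ hvw
  rw [Function.onFun, Finset.disjoint_left]
  intro M hMv hMw
  rw [mem_powersetCard] at hMv hMw
  obtain ⟨e, f, hef, rfl⟩ := card_eq_two.mp hMv.2
  simp only [insert_subset_iff, singleton_subset_iff, mem_incidenceFinset] at hMv hMw
  exact hef (Sym2.eq_of_ne_mem hvw hMv.1.1.2 hMw.1.1.2 hMv.1.2.2 hMw.1.2.2)

theorem numMatchings_two_add_sum_choose_degree :
    numMatchings G 2 + ∑ v, (G.degree v).choose 2 = (#G.edgeFinset).choose 2 := by
  rw [numMatchings_two_eq_card_filter, ← card_powersetCard 2 G.edgeFinset,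
    ← card_filter_add_card_filter_not (s := G.edgeFinset.powersetCard 2) PairwiseVertexDisjoint,
    filter_not_pairwiseVertexDisjoint_eq_biUnion,
    card_biUnion (pairwiseDisjoint_powersetCard_two_incidenceFinset G)]
  simp [card_incidenceFinset_eq_degree]

-- `C(d, 2)` is its chord between `d = k` and `d = n - 1` minus `(d - k) (n - 1 - d) / 2`.
theorem two_mul_numMatchings_two_eq (k : ℕ) :
    2 * (numMatchings G 2 : ℤ) =
      #G.edgeFinset * (#G.edgeFinset - 1) - Fintype.card V * k * (k - 1)
        - (2 * #G.edgeFinset - Fintype.card V * k) * (Fintype.card V + k - 2)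
        + ∑ v, ((G.degree v : ℤ) - k) * (Fintype.card V - 1 - G.degree v) := by
  have hcount := congrArg (Nat.cast : ℕ → ℚ) (numMatchings_two_add_sum_choose_degree G)
  have hdeg : ∑ v, (G.degree v : ℚ) = 2 * #G.edgeFinset := by
    exact_mod_cast sum_degrees_eq_twice_card_edges G
  push_cast [Nat.cast_choose_two] at hcount
  qify
  rw [sum_congr rfl fun v _ => show ((G.degree v : ℚ) - k) * (Fintype.card V - 1 - G.degree v) =
      k * (k - 1) - k * (Fintype.card V + k - 2) + (Fintype.card V + k - 2) * G.degree v
        - G.degree v * (G.degree v - 1) by ring]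
  simp only [sum_sub_distrib, sum_add_distrib, ← mul_sum, sum_const, card_univ, hdeg,
    ← sum_div] at hcount ⊢
  linear_combination 2 * hcount

end Matchings

section SGraph

variable {n k : ℕ}

instance : DecidableRel (sGraph n k).Adj := fun i j =>
  inferInstanceAs (Decidable (i ≠ j ∧ ((i : ℕ) < k ∨ (j : ℕ) < k)))

@[simp]
theorem sGraph_adj {i j : Fin n} : (sGraph n k).Adj i j ↔ i ≠ j ∧ ((i : ℕ) < k ∨ (j : ℕ) < k) :=
  Iff.rfl

theorem sGraph_isVertexCover :
    (sGraph n k).IsVertexCover ↑(univ.filter fun i : Fin n => (i : ℕ) < k) :=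
  fun _ _ h => by simpa using h.2

theorem sGraph_degree (hkn : k ≤ n) (v : Fin n) :
    (sGraph n k).degree v = if (v : ℕ) < k then n - 1 else k := by
  rw [← card_neighborFinset_eq_degree]
  split_ifs with hv
  · rw [show (sGraph n k).neighborFinset v = univ.erase v by ext u; simp [hv, eq_comm]]
    simp
  · rw [show (sGraph n k).neighborFinset v = univ.filter fun i : Fin n => (i : ℕ) < k by
      ext u; simp only [mem_neighborFinset, sGraph_adj, hv, mem_filter, mem_univ, true_and]; grind]
    simp [Fin.card_filter_val_lt, hkn]

theorem two_mul_card_edgeFinset_sGraph (hkn : k ≤ n) :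
    2 * #(sGraph n k).edgeFinset = k * (n - 1) + (n - k) * k := by
  rw [← sum_degrees_eq_twice_card_edges]
  simp only [sGraph_degree hkn]
  rw [sum_ite, sum_const, sum_const, filter_not, card_sdiff_of_subset (filter_subset _ _)]
  simp [Fin.card_filter_val_lt, hkn]

theorem sum_sGraph_degree_defect_eq_zero (hkn : k ≤ n) :
    ∑ v, (((sGraph n k).degree v : ℤ) - k) * (n - 1 - (sGraph n k).degree v) = 0 :=
  sum_eq_zero fun v _ => by
    rw [sGraph_degree hkn]
    split_ifs
    · rw [Nat.cast_sub (by omega : 1 ≤ n)]; ring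
    · ring

theorem two_mul_numMatchings_two_sGraph_add_le {G : SimpleGraph (Fin n)} [DecidableRel G.Adj]
    (hk : 2 ≤ k) (hkn : k + 2 ≤ n) (hm : #(sGraph n k).edgeFinset ≤ #G.edgeFinset) :
    2 * (numMatchings (sGraph n k) 2 : ℤ) + (#G.edgeFinset - #(sGraph n k).edgeFinset)
      + ∑ v, ((G.degree v : ℤ) - k) * (n - 1 - G.degree v) ≤ 2 * numMatchings G 2 := by
  have hS := two_mul_numMatchings_two_eq (sGraph n k) k
  have hG := two_mul_numMatchings_two_eq G k
  have hm1 : 2 * (#(sGraph n k).edgeFinset : ℤ) = k * (n - 1) + (n - k) * k := by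
    have := two_mul_card_edgeFinset_sGraph (by omega : k ≤ n)
    zify [(by omega : 1 ≤ n), (by omega : k ≤ n)] at this
    exact this
  rw [Fintype.card_fin, sum_sGraph_degree_defect_eq_zero (by omega)] at hS
  rw [Fintype.card_fin] at hG
  have hm' : (#(sGraph n k).edgeFinset : ℤ) ≤ #G.edgeFinset := by exact_mod_cast hm
  have hfactor : (0 : ℤ) ≤ #G.edgeFinset + #(sGraph n k).edgeFinset + 2 - 2 * n - 2 * k := by
    nlinarith [mul_nonneg (by omega : (0 : ℤ) ≤ k - 1) (by omega : (0 : ℤ) ≤ n - k - 2),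
      mul_nonneg (by omega : (0 : ℤ) ≤ k - 2) (by omega : (0 : ℤ) ≤ k + 1)]
  linear_combination hS - hG + mul_nonneg (sub_nonneg.mpr hm') hfactor

theorem nonempty_iso_sGraph_of_adj_iff {G : SimpleGraph (Fin n)} {A : Finset (Fin n)}
    (hA : #A = k) (hk : k ≤ n) (hadj : ∀ u v, G.Adj u v ↔ u ≠ v ∧ (u ∈ A ∨ v ∈ A)) :
    Nonempty (G ≃g sGraph n k) := by
  obtain ⟨σ, hσ⟩ := Equiv.Perm.exists_map_finset_eq A (univ.filter fun i : Fin n => (i : ℕ) < k)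
    (by simp [hA, Fin.card_filter_val_lt, hk])
  have hσA : ∀ v, (σ v : ℕ) < k ↔ v ∈ A := fun v => by
    simpa using (Finset.ext_iff.mp hσ (σ v)).symm
  exact ⟨⟨σ, by simp [hσA, hadj]⟩⟩

theorem nonempty_iso_sGraph_of_degree {G : SimpleGraph (Fin n)} [DecidableRel G.Adj]
    (hkn : k + 1 < n) (hdeg : ∀ v, G.degree v = k ∨ G.degree v = n - 1)
    (hm : #G.edgeFinset = #(sGraph n k).edgeFinset) : Nonempty (G ≃g sGraph n k) := by
  classical
  set A := univ.filter fun v => G.IsUniversal v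
  have hdegA : ∀ v, G.degree v = if v ∈ A then n - 1 else k := fun v => by
    rcases hdeg v with h | h <;> simp [A, ← degree_eq_card_sub_one, h]
  have hA : #A = k := by
    have h := two_mul_card_edgeFinset_sGraph (by omega : k ≤ n)
    rw [← hm, ← sum_degrees_eq_twice_card_edges] at h
    simp only [hdegA] at h
    rw [sum_ite, sum_const, sum_const, filter_mem_eq_inter, univ_inter, filter_not,
      filter_mem_eq_inter, univ_inter, card_sdiff_of_subset (subset_univ A), card_univ,
      Fintype.card_fin, smul_eq_mul, smul_eq_mul] at h
    have hAn : #A ≤ n := by simpa using card_le_univ A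
    zify [(by omega : 1 ≤ n), (by omega : k ≤ n), hAn] at h
    have : ((#A : ℤ) - k) * (n - 1 - k) = 0 := by linear_combination h
    rcases mul_eq_zero.mp this with h | h <;> omega
  have huniv : ∀ a ∈ A, G.IsUniversal a := fun a ha => (mem_filter.mp ha).2
  have hnbr : ∀ v ∉ A, G.neighborFinset v = A := fun v hv => by
    refine (eq_of_subset_of_card_le (fun a ha => ?_) ?_).symm
    · exact (mem_neighborFinset ..).mpr (huniv a ha (ne_of_mem_of_not_mem ha hv)).symm
    · rw [card_neighborFinset_eq_degree, hdegA, if_neg hv, hA]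
  refine nonempty_iso_sGraph_of_adj_iff hA (by omega) fun u v => ⟨fun h => ⟨h.ne, ?_⟩, ?_⟩
  · by_contra! hu
    exact hu.2 (hnbr u hu.1 ▸ (mem_neighborFinset ..).mpr h)
  · rintro ⟨huv, hu | hv⟩
    · exact huniv u hu huv
    · exact (huniv v hv huv.symm).symm

end SGraph

/-- For `n ≥ s ≥ 4`, every `K_s`-saturated graph `G` on `n` vertices satisfies
`N(M_2, G) ≥ N(M_2, S_{n,s-2})`, with equality iff `G ≅ S_{n,s-2}`. -/
theorem stmt_19 (n s : ℕ) (hs : 4 ≤ s) (hn : s ≤ n) (G : SimpleGraph (Fin n))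
    (hG : IsKSat G s) :
    numMatchings (sGraph n (s - 2)) 2 ≤ numMatchings G 2 ∧
    (numMatchings G 2 = numMatchings (sGraph n (s - 2)) 2 ↔
      Nonempty (G ≃g sGraph n (s - 2))) := by
  classical
  obtain ⟨k, rfl⟩ : ∃ k, s = k + 2 := ⟨s - 2, by omega⟩
  rw [Nat.add_sub_cancel]
  have hm : #(sGraph n k).edgeFinset ≤ #G.edgeFinset :=
    hG.card_edgeFinset_le_of_isVertexCover (by simp [Fin.card_filter_val_lt])
      sGraph_isVertexCover
  have hdefect : ∀ v, 0 ≤ ((G.degree v : ℤ) - k) * (n - 1 - G.degree v) := fun v => by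
    have hlow := hG.le_degree (by simp; omega) v
    have hhigh := G.degree_lt_card_verts v
    rw [Fintype.card_fin] at hhigh
    exact mul_nonneg (by omega) (by omega)
  have hle := two_mul_numMatchings_two_sGraph_add_le (G := G) (by omega) hn hm
  have hsum := sum_nonneg fun v (_ : v ∈ univ) => hdefect v
  have hm' : (#(sGraph n k).edgeFinset : ℤ) ≤ #G.edgeFinset := by exact_mod_cast hm
  refine ⟨by exact_mod_cast (by linarith : (numMatchings (sGraph n k) 2 : ℤ) ≤ numMatchings G 2),
    fun heq => ?_, fun ⟨f⟩ => numMatchings_congr f 2⟩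
  have heq' : (numMatchings G 2 : ℤ) = numMatchings (sGraph n k) 2 := by exact_mod_cast heq
  have hzero := (sum_eq_zero_iff_of_nonneg fun v _ => hdefect v).mp (by linarith)
  refine nonempty_iso_sGraph_of_degree (by omega) (fun v => ?_) (by zify; linarith)
  rcases mul_eq_zero.mp (hzero v (mem_univ v)) with h | h
  · left; omega
  · right; omega
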